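/- Let $\alpha \in \mathbb{C}$, $a, x > 0$, $b \in \mathbb{C}$, and $c > \max\{(1-\mathrm{Re}(b))/a, (1-\mathrm{Re}(b-\alpha))/a, 0\}$. Then $\frac{1}{2\pi i}\int_{c-i\infty}^{c+i\infty} \Gamma(s)\,\zeta(as+b)\,\zeta(as+b-\alpha)\, x^{-s}\, ds = \sum_{n=1}^{\infty} \frac{\sigma_\alpha(n)}{n^b} e^{-n^a x}$. -/

import Mathlib

/-!
Mellin inversion of `Γ` (the Cahen–Mellin integral) gives `(2πi)⁻¹ ∫_{(c)} Γ(s) y^{-s} ds = e^{-y}`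
for `y > 0`. On the line `Re s = c` the Dirichlet series
`ζ(as + b) ζ(as + b - α) = ∑ σ_α(n) n^{-b} n^{-as}` converges absolutely, and `Γ(c + it)` is
integrable in `t` since `Γ(s + 2) = s (s + 1) Γ(s)` forces decay like `t⁻²`. Hence the series may be
integrated termwise, and the `n`-th term gives `σ_α(n) n^{-b} e^{-n^a x}` (take `y = n^a x`).
-/

open Complex Real Filter MeasureTheory

/-- The generalized divisor function `σ_α(n) = ∑_{d ∣ n} d^α` for complex `α`. -/
noncomputable def sigmaC (α : ℂ) (n : ℕ) : ℂ := ∑ d ∈ n.divisors, (d : ℂ) ^ α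

open LSeries
open scoped LSeries.notation

lemma LSeries.term_natCast_cpow (α w : ℂ) (n : ℕ) :
    term (fun n : ℕ ↦ (n : ℂ) ^ α) w n = term 1 (w - α) n := by
  rcases eq_or_ne n 0 with rfl | hn
  · simp only [term_zero]
  · rw [term_of_ne_zero hn, term_of_ne_zero hn, Pi.one_apply,
      cpow_sub _ _ (Nat.cast_ne_zero.mpr hn), one_div_div]

lemma one_convolution_cpow_eq_sigmaC (α : ℂ) : (1 ⍟ fun n : ℕ ↦ (n : ℂ) ^ α) = sigmaC α := by
  funext n
  rw [LSeries.convolution_def, sigmaC,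
    ← Nat.sum_divisorsAntidiagonal' (f := fun _ d ↦ (d : ℂ) ^ α)]
  simp only [Pi.one_apply, one_mul]

lemma LSeriesHasSum_sigmaC {α w : ℂ} (hw : 1 < w.re) (hwα : 1 < (w - α).re) :
    LSeriesHasSum (sigmaC α) w (riemannZeta w * riemannZeta (w - α)) := by
  have hcpow : LSeriesHasSum (fun n : ℕ ↦ (n : ℂ) ^ α) w (riemannZeta (w - α)) := by
    rw [LSeriesHasSum, funext (term_natCast_cpow α w)]
    exact LSeriesHasSum_one hwα
  rw [← one_convolution_cpow_eq_sigmaC]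
  exact (LSeriesHasSum_one hw).convolution hcpow

lemma LSeries.term_mul_add_mul_cpow_neg (f : ℕ → ℂ) {m : ℕ} (hm : m ≠ 0) {x : ℝ} (hx : 0 ≤ x)
    (a : ℝ) (b s : ℂ) :
    term f (a * s + b) m * (x : ℂ) ^ (-s) =
      f m / (m : ℂ) ^ b * (((m : ℝ) ^ a * x : ℝ) : ℂ) ^ (-s) := by
  have hm' : (m : ℂ) ≠ 0 := Nat.cast_ne_zero.mpr hm
  rw [term_of_ne_zero hm, ofReal_mul, mul_cpow_ofReal_nonneg (by positivity) hx,
    ← cpow_mul_ofReal_nonneg (Nat.cast_nonneg m), ofReal_natCast, cpow_add _ _ hm', mul_neg]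
  simp only [cpow_neg]
  field_simp

lemma norm_Gamma_le_Gamma_re {s : ℂ} (hs : 0 < s.re) : ‖Complex.Gamma s‖ ≤ Real.Gamma s.re := by
  rw [Complex.Gamma_eq_integral hs, Real.Gamma_eq_integral hs, GammaIntegral]
  refine (norm_integral_le_integral_norm _).trans_eq (setIntegral_congr_fun measurableSet_Ioi ?_)
  intro t (ht : 0 < t)
  dsimp only
  rw [norm_mul, norm_real, norm_cpow_eq_rpow_re_of_pos ht, Real.norm_of_nonneg (Real.exp_nonneg _),
    sub_re, one_re]

lemma sq_im_mul_norm_Gamma_le {s : ℂ} (hs : 0 < s.re) :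
    s.im ^ 2 * ‖Complex.Gamma s‖ ≤ Real.Gamma (s.re + 2) := by
  have hs0 : s ≠ 0 := fun h ↦ by simp [h] at hs
  have hs1 : s + 1 ≠ 0 := fun h ↦ by
    have := congrArg re h
    simp only [add_re, one_re, zero_re] at this
    linarith
  have him : s.im ^ 2 ≤ ‖s‖ * ‖s + 1‖ := by
    rw [← sq_abs, sq]
    exact mul_le_mul (abs_im_le_norm s) (by simpa using abs_im_le_norm (s + 1)) (abs_nonneg _)
      (norm_nonneg _)
  calc s.im ^ 2 * ‖Complex.Gamma s‖ ≤ ‖s‖ * ‖s + 1‖ * ‖Complex.Gamma s‖ := by gcongr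
    _ = ‖Complex.Gamma (s + 2)‖ := by
      rw [show s + 2 = s + 1 + 1 by ring, Complex.Gamma_add_one _ hs1,
        Complex.Gamma_add_one _ hs0, norm_mul, norm_mul]
      ring
    _ ≤ Real.Gamma (s.re + 2) := by
      simpa using norm_Gamma_le_Gamma_re (s := s + 2) (by simp; linarith)

lemma continuous_Gamma_vertical {c : ℝ} (hc : 0 < c) :
    Continuous fun t : ℝ ↦ Complex.Gamma (c + t * I) := by
  refine continuous_iff_continuousAt.mpr fun t ↦
    ContinuousAt.comp (g := Complex.Gamma) ?_ (by fun_prop)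
  refine continuousAt_Gamma _ fun m h ↦ ?_
  have := congrArg re h
  simp only [add_re, ofReal_re, mul_re, I_re, mul_zero, ofReal_im, I_im, mul_one, sub_self,
    add_zero, neg_re, natCast_re] at this
  linarith [(Nat.cast_nonneg m : (0 : ℝ) ≤ m)]

lemma integrable_Gamma_vertical {c : ℝ} (hc : 0 < c) :
    Integrable fun t : ℝ ↦ Complex.Gamma (c + t * I) := by
  refine (integrable_inv_one_add_sq.const_mul (Real.Gamma c + Real.Gamma (c + 2))).mono'
    (continuous_Gamma_vertical hc).aestronglyMeasurable (Eventually.of_forall fun t ↦ ?_)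
  have hre : (c + t * I : ℂ).re = c := by simp
  have him : (c + t * I : ℂ).im = t := by simp
  have h0 := norm_Gamma_le_Gamma_re (s := c + t * I) (by rwa [hre])
  have h2 := sq_im_mul_norm_Gamma_le (s := c + t * I) (by rwa [hre])
  rw [hre] at h0
  rw [hre, him] at h2
  rw [← div_eq_mul_inv, le_div_iff₀ (by positivity)]
  linarith

lemma integral_Gamma_mul_cpow_neg {c y : ℝ} (hc : 0 < c) (hy : 0 < y) :
    ∫ t : ℝ, Complex.Gamma (c + t * I) * (y : ℂ) ^ (-(c + t * I)) = 2 * π * exp (-(y : ℂ)) := by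
  set f : ℝ → ℂ := fun u ↦ (Real.exp (-u) : ℂ)
  have hmellin : ∀ t : ℝ, mellin f (c + t * I) = Complex.Gamma (c + t * I) := fun t ↦ by
    rw [Complex.Gamma_eq_integral (by simpa using hc), GammaIntegral_eq_mellin]
  have hconv : MellinConvergent f c := by
    refine (Complex.GammaIntegral_convergent (s := c) (by simpa using hc)).congr_fun (fun t _ ↦ ?_)
      measurableSet_Ioi
    simp only [f, smul_eq_mul, mul_comm]
  have hvert : VerticalIntegrable (mellin f) c := by
    simpa only [VerticalIntegrable, hmellin] using integrable_Gamma_vertical hc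
  have key := mellinInv_mellin_eq c f hy hconv hvert (by fun_prop)
  simp only [mellinInv, hmellin, smul_eq_mul, f] at key
  rw [real_smul, ofReal_exp, ofReal_neg] at key
  rw [← key, ← mul_assoc, ← ofReal_ofNat, ← ofReal_mul, ← ofReal_mul, mul_one_div_cancel (by positivity),
    ofReal_one, one_mul]
  simp only [mul_comm (Complex.Gamma _)]

lemma integral_Gamma_mul_tsum_cpow_neg {c : ℝ} (hc : 0 < c) {A : ℕ → ℂ} {y : ℕ → ℝ}
    (hy : ∀ n, 0 < y n) (hA : Summable fun n ↦ ‖A n‖ * y n ^ (-c)) :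
    ∫ t : ℝ, Complex.Gamma (c + t * I) * ∑' n, A n * (y n : ℂ) ^ (-(c + t * I)) =
      2 * π * ∑' n, A n * exp (-(y n : ℂ)) := by
  set F : ℕ → ℝ → ℂ := fun n t ↦ Complex.Gamma (c + t * I) * (A n * (y n : ℂ) ^ (-(c + t * I)))
  have hnorm : ∀ n t, ‖F n t‖ = ‖A n‖ * y n ^ (-c) * ‖Complex.Gamma (c + t * I)‖ := fun n t ↦ by
    simp only [F, norm_mul, norm_cpow_eq_rpow_re_of_pos (hy n), neg_re, add_re, ofReal_re,
      mul_re, I_re, I_im, ofReal_im, mul_zero, mul_one, sub_self, add_zero]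
    ring
  have hcont : ∀ n, Continuous (F n) := fun n ↦
    (continuous_Gamma_vertical hc).mul (continuous_const.mul
      (Continuous.const_cpow (by fun_prop) (.inl (ofReal_ne_zero.mpr (hy n).ne'))))
  have hint : ∀ n, Integrable (F n) := fun n ↦
    ((integrable_Gamma_vertical hc).norm.const_mul _).mono' (hcont n).aestronglyMeasurable
      (Eventually.of_forall fun t ↦ (hnorm n t).le)
  have hsum : Summable fun n ↦ ∫ t, ‖F n t‖ := by
    simp_rw [hnorm, integral_const_mul]
    exact hA.mul_right _
  calc ∫ t : ℝ, Complex.Gamma (c + t * I) * ∑' n, A n * (y n : ℂ) ^ (-(c + t * I))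
      = ∫ t, ∑' n, F n t := by simp only [F, tsum_mul_left]
    _ = ∑' n, ∫ t, F n t := (integral_tsum_of_summable_integral_norm hint hsum).symm
    _ = ∑' n, 2 * π * (A n * exp (-(y n : ℂ))) := by
      refine tsum_congr fun n ↦ ?_
      simp only [F, mul_left_comm _ (A n), integral_const_mul,
        integral_Gamma_mul_cpow_neg hc (hy n)]
    _ = 2 * π * ∑' n, A n * exp (-(y n : ℂ)) := tsum_mul_left

lemma hasSum_sigmaC_div_cpow_mul_cpow_neg {α b s : ℂ} {a x : ℝ} (hx : 0 ≤ x)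
    (h : 1 < (a * s + b).re) (hα : 1 < (a * s + b - α).re) :
    HasSum (fun n : ℕ ↦ sigmaC α (n + 1) / ((n + 1 : ℕ) : ℂ) ^ b *
        ((((n + 1 : ℕ) : ℝ) ^ a * x : ℝ) : ℂ) ^ (-s))
      (riemannZeta (a * s + b) * riemannZeta (a * s + b - α) * (x : ℂ) ^ (-s)) := by
  have hsum := ((hasSum_nat_add_iff' 1).mpr (LSeriesHasSum_sigmaC h hα)).mul_right ((x : ℂ) ^ (-s))
  simp only [Finset.range_one, Finset.sum_singleton, term_zero, sub_zero] at hsum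
  rwa [funext fun n ↦ term_mul_add_mul_cpow_neg (sigmaC α) n.succ_ne_zero hx a b s] at hsum

/-- Mellin–Barnes identity for `σ_α(n)`. -/
theorem mellin_barnes_sigma (α : ℂ) (x a : ℝ) (b : ℂ) (c : ℝ)
    (hx : 0 < x) (ha : 0 < a) (hc0 : 0 < c)
    (hc1 : (1 - b.re) / a < c) (hc2 : (1 - (b - α).re) / a < c) :
    (2 * (π : ℂ) * Complex.I)⁻¹ *
      (Complex.I * ∫ t : ℝ, Complex.Gamma ((c : ℂ) + (t : ℂ) * Complex.I) *
        riemannZeta ((a : ℂ) * ((c : ℂ) + (t : ℂ) * Complex.I) + b) *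
        riemannZeta ((a : ℂ) * ((c : ℂ) + (t : ℂ) * Complex.I) + b - α) *
        (x : ℂ) ^ (-((c : ℂ) + (t : ℂ) * Complex.I))) =
    ∑' n : ℕ, sigmaC α (n + 1) / ((n + 1 : ℕ) : ℂ) ^ b *
      Complex.exp (-((((n + 1 : ℕ) : ℝ) ^ a * x : ℝ) : ℂ)) := by
  rw [div_lt_iff₀ ha] at hc1
  rw [div_lt_iff₀ ha, sub_re] at hc2
  have hre : ∀ t : ℝ, ((a : ℂ) * (c + t * I) + b).re = a * c + b.re := fun t ↦ by simp
  have hseries (t : ℝ) := hasSum_sigmaC_div_cpow_mul_cpow_neg (α := α) (s := c + t * I) hx.le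
    (by rw [hre]; linarith) (by rw [sub_re, hre]; linarith)
  have hsum : Summable fun n : ℕ ↦ ‖sigmaC α (n + 1) / ((n + 1 : ℕ) : ℂ) ^ b‖ *
      (((n + 1 : ℕ) : ℝ) ^ a * x) ^ (-c) := by
    have hsummable := (hseries 0).summable
    simp only [ofReal_zero, zero_mul, add_zero] at hsummable
    refine (summable_norm_iff.mpr hsummable).congr fun n ↦ ?_
    rw [norm_mul, norm_cpow_eq_rpow_re_of_pos (by positivity), neg_re, ofReal_re]
  simp_rw [mul_assoc (Complex.Gamma _), ← (hseries _).tsum_eq]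
  rw [integral_Gamma_mul_tsum_cpow_neg hc0 (fun n ↦ by positivity) hsum]
  have h2πI : (2 * π * I : ℂ) ≠ 0 := by simp [pi_ne_zero]
  rw [inv_mul_eq_iff_eq_mul₀ h2πI]
  ring
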